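/- The tensor A of order 3 dimension 2 with a_{111} = 1 and all other entries zero is weak column adequate but not column adequate. -/

import Mathlib

/-!
For the tensor `e` whose only nonzero entry is `e_{i₀ i₀ … i₀} = 1`, `(e x^k)_i` is `x_{i₀}^k` at
`i = i₀` and `0` elsewhere. The weak adequacy hypothesis at `i₀` reads `(x_{i₀}^k)² ≤ 0`, forcing
`e x^k = 0`. For even `k`, however, `x_{i₀} (e x^k)_{i₀} = x_{i₀}^{k+1}` has the sign of `x_{i₀}`,
so `x = (-1, …, -1)` satisfies the column adequacy hypothesis while `e x^k ≠ 0`.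
-/

open Finset Matrix

/-- For a tensor `A` of order `k+1` and dimension `n` (entries `A i f` with row index `i`
and remaining indices `f`), `tmul A x i = (A x^k)_i`. -/
def tmul {n k : ℕ} (A : Fin n → (Fin k → Fin n) → ℝ) (x : Fin n → ℝ) (i : Fin n) : ℝ :=
  ∑ f : Fin k → Fin n, A i f * ∏ j, x (f j)

/-- A tensor is column adequate if `x_i (A x^{m-1})_i ≤ 0` for all `i` implies `A x^{m-1} = 0`. -/
def ColumnAdequate {n k : ℕ} (A : Fin n → (Fin k → Fin n) → ℝ) : Prop :=
  ∀ x : Fin n → ℝ, (∀ i, x i * tmul A x i ≤ 0) → ∀ i, tmul A x i = 0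

def WeakColumnAdequate {n k : ℕ} (A : Fin n → (Fin k → Fin n) → ℝ) : Prop :=
  ∀ x : Fin n → ℝ, (∀ i, x i ^ k * tmul A x i ≤ 0) → ∀ i, tmul A x i = 0

/-- The order-3 dimension-2 tensor with `a_{111} = 1` and all other entries zero. -/
noncomputable def exTensor10 : Fin 2 → (Fin 2 → Fin 2) → ℝ := fun i f =>
  if i = 0 ∧ f = ![0, 0] then 1 else 0

noncomputable def diagUnitTensor {n k : ℕ} (i₀ : Fin n) : Fin n → (Fin k → Fin n) → ℝ :=
  fun i f => if i = i₀ ∧ f = fun _ => i₀ then 1 else 0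

section DiagUnitTensor

variable {n k : ℕ} (i₀ : Fin n)

theorem tmul_diagUnitTensor (x : Fin n → ℝ) (i : Fin n) :
    tmul (diagUnitTensor (k := k) i₀) x i = if i = i₀ then x i₀ ^ k else 0 := by
  simp [tmul, diagUnitTensor, ite_and, Finset.sum_ite_eq']

theorem weakColumnAdequate_diagUnitTensor : WeakColumnAdequate (diagUnitTensor (k := k) i₀) := by
  intro x hx i
  have hx₀ : x i₀ ^ k * x i₀ ^ k ≤ 0 := by simpa [tmul_diagUnitTensor] using hx i₀
  rw [tmul_diagUnitTensor, mul_self_eq_zero.mp (le_antisymm hx₀ (mul_self_nonneg _)), ite_self]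

theorem not_columnAdequate_diagUnitTensor (hk : Even k) :
    ¬ ColumnAdequate (diagUnitTensor (k := k) i₀) := by
  intro h
  have hneg : ∀ i, (-1 : ℝ) * tmul (diagUnitTensor (k := k) i₀) (fun _ => -1) i ≤ 0 := by
    intro i
    rw [tmul_diagUnitTensor, hk.neg_one_pow]
    split_ifs <;> norm_num
  simpa [tmul_diagUnitTensor, hk.neg_one_pow] using h _ hneg i₀

end DiagUnitTensor

theorem exTensor10_eq_diagUnitTensor : exTensor10 = diagUnitTensor 0 := by
  have h : (![0, 0] : Fin 2 → Fin 2) = fun _ => 0 := by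
    ext j
    fin_cases j <;> rfl
  unfold exTensor10 diagUnitTensor
  rw [h]

/-- This tensor is weak column adequate but not column adequate. -/
theorem exTensor10_weak_column_adequate_not_column_adequate :
    WeakColumnAdequate exTensor10 ∧ ¬ ColumnAdequate exTensor10 := by
  rw [exTensor10_eq_diagUnitTensor]
  exact ⟨weakColumnAdequate_diagUnitTensor 0, not_columnAdequate_diagUnitTensor 0 even_two⟩
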